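/- arXiv:1505.04358 — 5 statements merged into one kernel-verified Lean document; each statement's English description precedes it below -/
import Mathlib

section
/- The function A ↦ 1/det(A) is convex on the set of positive definite n×n Hermitian matrices; that is, for all positive definite Hermitian matrices A, B and t ∈ [0,1], one has 1/det(tA + (1−t)B) ≤ t/det(A) + (1−t)/det(B). -/
/-!
Writing `A = C⋆C` with `C` invertible gives `tA + (1-t)B = C⋆(t + (1-t)M)C` with
`M = C⋆⁻¹BC⁻¹` positive definite, so `det(tA + (1-t)B) ≥ det(A)^t det(B)^(1-t)` reduces to
`det(t + (1-t)M) ≥ det(M)^(1-t)`, which is weighted AM-GM applied to each eigenvalue of `M`.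
Convexity of `1/det` follows from this log-concavity by weighted AM-GM once more.
-/

open scoped ComplexOrder

namespace Real

lemma prod_rpow_le_prod_add_mul {ι : Type*} (s : Finset ι) {μ : ι → ℝ} (hμ : ∀ i ∈ s, 0 ≤ μ i)
    {t : ℝ} (ht0 : 0 ≤ t) (ht1 : t ≤ 1) :
    (∏ i ∈ s, μ i) ^ (1 - t) ≤ ∏ i ∈ s, (t + (1 - t) * μ i) := by
  rw [← finsetProd_rpow s μ hμ]
  refine Finset.prod_le_prod (fun i hi => rpow_nonneg (hμ i hi) _) fun i hi => ?_
  simpa using geom_mean_le_arith_mean2_weighted ht0 (sub_nonneg.2 ht1) zero_le_one (hμ i hi)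
    (add_sub_cancel t 1)

end Real

namespace Matrix

open scoped MatrixOrder
open RCLike

variable {𝕜 ι : Type*} [RCLike 𝕜] [Fintype ι] [DecidableEq ι]

lemma IsHermitian.det_cfc {A : Matrix ι ι 𝕜} (hA : A.IsHermitian) (f : ℝ → ℝ) :
    (cfc f A).det = ∏ i, (f (hA.eigenvalues i) : 𝕜) := by
  rw [hA.cfc_eq, IsHermitian.cfc, Unitary.conjStarAlgAut_apply, det_mul_right_comm]
  simp

lemma IsHermitian.smul_one_add_smul_eq_cfc {A : Matrix ι ι 𝕜} (hA : A.IsHermitian) (a b : ℝ) :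
    (a : 𝕜) • (1 : Matrix ι ι 𝕜) + (b : 𝕜) • A = cfc (fun x => a + b * x) A := by
  rw [cfc_add .., cfc_const_mul .., cfc_const .., cfc_id' ..]
  simp [Algebra.algebraMap_eq_smul_one]

lemma IsHermitian.ofReal_re_det {A : Matrix ι ι 𝕜} (hA : A.IsHermitian) :
    ((re A.det : ℝ) : 𝕜) = A.det := by
  rw [hA.det_eq_prod_eigenvalues, ← ofReal_prod, ofReal_re]

lemma PosDef.re_det_pos {A : Matrix ι ι 𝕜} (hA : A.PosDef) : 0 < re A.det :=
  (pos_iff.mp hA.det_pos).1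

lemma re_det_star_mul_mul (C X : Matrix ι ι 𝕜) :
    re (star C * X * C).det = re (star C * C).det * re X.det := by
  have hC : (star C * C).IsHermitian := isHermitian_conjTranspose_mul_self C
  rw [det_mul_right_comm, det_mul, ← hC.ofReal_re_det, re_ofReal_mul, ofReal_re]

lemma PosDef.re_det_rpow_le_re_det_smul_one_add_smul {M : Matrix ι ι 𝕜} (hM : M.PosDef)
    {t : ℝ} (ht0 : 0 ≤ t) (ht1 : t ≤ 1) :
    re M.det ^ (1 - t) ≤ re ((t : 𝕜) • (1 : Matrix ι ι 𝕜) + ((1 - t : ℝ) : 𝕜) • M).det := by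
  rw [hM.isHermitian.smul_one_add_smul_eq_cfc, hM.isHermitian.det_cfc, ← ofReal_prod, ofReal_re,
    hM.isHermitian.det_eq_prod_eigenvalues, ← ofReal_prod, ofReal_re]
  exact Real.prod_rpow_le_prod_add_mul _ (fun i _ => (hM.eigenvalues_pos i).le) ht0 ht1

theorem PosDef.re_det_rpow_mul_re_det_rpow_le {A B : Matrix ι ι 𝕜} (hA : A.PosDef)
    (hB : B.PosDef) {t : ℝ} (ht0 : 0 ≤ t) (ht1 : t ≤ 1) :
    re A.det ^ t * re B.det ^ (1 - t) ≤ re ((t : 𝕜) • A + ((1 - t : ℝ) : 𝕜) • B).det := by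
  have ha := hA.re_det_pos
  obtain ⟨C, hC, rfl⟩ :=
    CStarAlgebra.isStrictlyPositive_iff_eq_star_mul_self.mp hA.isStrictlyPositive
  lift C to (Matrix ι ι 𝕜)ˣ using hC
  obtain ⟨M, hM, hBM⟩ : ∃ M : Matrix ι ι 𝕜, M.PosDef ∧ B = star (C : Matrix ι ι 𝕜) * M * C :=
    ⟨star (↑C⁻¹ : Matrix ι ι 𝕜) * B * (↑C⁻¹ : Matrix ι ι 𝕜),
      (IsUnit.posDef_star_left_conjugate_iff (Units.isUnit C⁻¹)).mpr hB, by
        rw [← mul_assoc, ← mul_assoc, ← star_mul, Units.inv_mul, star_one, one_mul, mul_assoc,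
          Units.inv_mul, mul_one]⟩
  have hcomb : (t : 𝕜) • (star (C : Matrix ι ι 𝕜) * C) + ((1 - t : ℝ) : 𝕜) • B
      = star (C : Matrix ι ι 𝕜) * ((t : 𝕜) • 1 + ((1 - t : ℝ) : 𝕜) • M) * C := by
    rw [hBM]
    simp only [mul_add, add_mul, mul_smul_comm, smul_mul_assoc, mul_one]
  rw [hcomb, hBM, re_det_star_mul_mul, re_det_star_mul_mul, Real.mul_rpow ha.le hM.re_det_pos.le,
    ← mul_assoc, ← Real.rpow_add ha, add_sub_cancel, Real.rpow_one]
  exact mul_le_mul_of_nonneg_left (hM.re_det_rpow_le_re_det_smul_one_add_smul ht0 ht1) ha.le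

end Matrix

/-- Convexity of `A ↦ 1/det A` on positive definite Hermitian matrices. -/
theorem inv_det_convex (n : ℕ) (A B : Matrix (Fin n) (Fin n) ℂ)
    (hA : A.PosDef) (hB : B.PosDef) (t : ℝ) (ht0 : 0 ≤ t) (ht1 : t ≤ 1) :
    1 / (((t : ℂ) • A + ((1 - t : ℝ) : ℂ) • B).det).re ≤
      t / A.det.re + (1 - t) / B.det.re := by
  have ha : 0 < A.det.re := hA.re_det_pos
  have hb : 0 < B.det.re := hB.re_det_pos
  calc 1 / (((t : ℂ) • A + ((1 - t : ℝ) : ℂ) • B).det).re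
      ≤ 1 / (A.det.re ^ t * B.det.re ^ (1 - t)) :=
        one_div_le_one_div_of_le (by positivity) (hA.re_det_rpow_mul_re_det_rpow_le hB ht0 ht1)
    _ = (1 / A.det.re) ^ t * (1 / B.det.re) ^ (1 - t) := by
        rw [one_div, one_div, one_div, Real.inv_rpow ha.le, Real.inv_rpow hb.le, mul_inv]
    _ ≤ t * (1 / A.det.re) + (1 - t) * (1 / B.det.re) :=
        Real.geom_mean_le_arith_mean2_weighted ht0 (sub_nonneg.2 ht1) (by positivity)
          (by positivity) (add_sub_cancel t 1)
    _ = t / A.det.re + (1 - t) / B.det.re := by ring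
end

section
/- The function A ↦ tr(A⁻¹) is convex on the set of positive definite n×n Hermitian matrices; that is, for all positive definite Hermitian A, B and t ∈ [0,1], tr((tA + (1−t)B)⁻¹) ≤ t·tr(A⁻¹) + (1−t)·tr(B⁻¹). -/
/-!
For positive definite `A`, `tr A⁻¹` is the maximum over all matrices `X` of
`2 Re tr X - Re tr (Xᴴ A X)`, attained at `X = A⁻¹`: the gap is
`Re tr ((X - A⁻¹)ᴴ A (X - A⁻¹)) ≥ 0`.
Each of these functions is affine in `A`, and a pointwise supremum of affine functions is convex.
-/

open scoped ComplexOrder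

namespace Matrix

variable {𝕜 n : Type*} [RCLike 𝕜]

theorem convex_setOf_posDef : Convex ℝ {A : Matrix n n 𝕜 | A.PosDef} := by
  intro A hA B hB a b ha hb hab
  rcases ha.eq_or_lt with rfl | ha
  · simpa [show b = 1 by linarith] using hB
  exact (hA.smul ha).add_posSemidef (hB.posSemidef.smul hb)

variable [Fintype n] [DecidableEq n]

theorem PosDef.isGreatest_re_trace_inv {A : Matrix n n 𝕜} (hA : A.PosDef) :
    IsGreatest
      (Set.range fun X : Matrix n n 𝕜 ↦ 2 * RCLike.re X.trace - RCLike.re (Xᴴ * A * X).trace)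
      (RCLike.re A⁻¹.trace) := by
  have hdet : IsUnit A.det := A.isUnit_iff_isUnit_det.mp hA.isUnit
  have hAinv : A * A⁻¹ = 1 := mul_nonsing_inv A hdet
  have hinvA : A⁻¹ * A = 1 := nonsing_inv_mul A hdet
  have hinvH : A⁻¹ᴴ = A⁻¹ := hA.isHermitian.inv.eq
  refine ⟨⟨A⁻¹, ?_⟩, ?_⟩
  · dsimp only
    rw [hinvH, hinvA, one_mul]
    ring
  rintro _ ⟨X, rfl⟩
  have hgap := (hA.posSemidef.conjTranspose_mul_mul_same (X - A⁻¹)).trace_nonneg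
  have hexpand : (X - A⁻¹)ᴴ * A * (X - A⁻¹) = Xᴴ * A * X - Xᴴ - X + A⁻¹ := by
    rw [conjTranspose_sub, hinvH]
    simp only [sub_mul, mul_sub, hinvA, one_mul, Matrix.mul_assoc Xᴴ A A⁻¹, hAinv, mul_one]
    abel
  rw [hexpand, RCLike.nonneg_iff] at hgap
  simp only [trace_add, trace_sub, trace_conjTranspose, map_add, map_sub, RCLike.star_def,
    RCLike.conj_re] at hgap
  linarith [hgap.1]

theorem convexOn_re_trace_inv :
    ConvexOn ℝ {A : Matrix n n 𝕜 | A.PosDef} fun A ↦ RCLike.re A⁻¹.trace := by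
  refine ⟨convex_setOf_posDef, fun A hA B hB a b ha hb hab ↦ ?_⟩
  obtain ⟨⟨X, hX⟩, -⟩ := (convex_setOf_posDef hA hB ha hb hab).isGreatest_re_trace_inv
  have hA' := hA.isGreatest_re_trace_inv.2 ⟨X, rfl⟩
  have hB' := hB.isGreatest_re_trace_inv.2 ⟨X, rfl⟩
  dsimp only at hX hA' hB' ⊢
  simp only [mul_add, add_mul, Matrix.mul_smul, Matrix.smul_mul, trace_add, trace_smul, map_add,
    RCLike.smul_re] at hX
  calc RCLike.re (a • A + b • B)⁻¹.trace
      = a * (2 * RCLike.re X.trace - RCLike.re (Xᴴ * A * X).trace)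
        + b * (2 * RCLike.re X.trace - RCLike.re (Xᴴ * B * X).trace) := by
        rw [← hX]
        linear_combination (-2 * RCLike.re X.trace) * hab
    _ ≤ a * RCLike.re A⁻¹.trace + b * RCLike.re B⁻¹.trace := by gcongr

end Matrix

/-- Convexity of `A ↦ tr (A⁻¹)` on positive definite Hermitian matrices. -/
theorem trace_inv_convex (n : ℕ) (A B : Matrix (Fin n) (Fin n) ℂ)
    (hA : A.PosDef) (hB : B.PosDef) (t : ℝ) (ht0 : 0 ≤ t) (ht1 : t ≤ 1) :
    ((((t : ℂ) • A + ((1 - t : ℝ) : ℂ) • B)⁻¹).trace).re ≤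
      t * ((A⁻¹).trace).re + (1 - t) * ((B⁻¹).trace).re := by
  simpa only [Complex.coe_smul, RCLike.re_to_complex, smul_eq_mul] using
    Matrix.convexOn_re_trace_inv.2 hA hB ht0 (sub_nonneg.2 ht1) (add_sub_cancel t 1)
end

section
/- The function A ↦ det(A)^(1/n) is concave on positive definite n×n Hermitian matrices: for positive definite Hermitian A, B and t ∈ [0,1], det(tA + (1−t)B)^(1/n) ≥ t·det(A)^(1/n) + (1−t)·det(B)^(1/n). -/
/-!
Write `A = D⋆D` with `D` invertible. Then `B = D⋆CD` and `A + B = D⋆(1 + C)D` for a positive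
semidefinite `C` with eigenvalues `νᵢ`, so with `μᵢ` the eigenvalues of `A`, Minkowski's
determinant inequality `det A ^ (1/n) + det B ^ (1/n) ≤ det (A + B) ^ (1/n)` becomes the
superadditivity `(∏ μᵢ) ^ (1/n) + (∏ μᵢνᵢ) ^ (1/n) ≤ (∏ (μᵢ + μᵢνᵢ)) ^ (1/n)` of the geometric
mean, which is AM-GM applied to `aᵢ / (aᵢ + bᵢ)` and to `bᵢ / (aᵢ + bᵢ)`. Concavity follows by
applying Minkowski's inequality to `tA` and `(1 - t)B`, since `det ^ (1/n)` is positively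
homogeneous of degree one.
-/

open scoped ComplexOrder MatrixOrder
open Finset Matrix

namespace Real

variable {ι : Type*} [Fintype ι] [Nonempty ι]

theorem prod_rpow_inv_card_le_sum_div_card {z : ι → ℝ} (hz : ∀ i, 0 ≤ z i) :
    (∏ i, z i) ^ (Fintype.card ι : ℝ)⁻¹ ≤ (∑ i, z i) / Fintype.card ι := by
  simpa using geom_mean_le_arith_mean univ 1 z (fun _ _ ↦ zero_le_one)
    (by simp [Fintype.card_pos]) (fun i _ ↦ hz i)

theorem prod_rpow_inv_card_add_le {a b : ι → ℝ} (ha : ∀ i, 0 ≤ a i) (hb : ∀ i, 0 ≤ b i) :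
    (∏ i, a i) ^ (Fintype.card ι : ℝ)⁻¹ + (∏ i, b i) ^ (Fintype.card ι : ℝ)⁻¹ ≤
      (∏ i, (a i + b i)) ^ (Fintype.card ι : ℝ)⁻¹ := by
  set p : ℝ := (Fintype.card ι : ℝ)⁻¹
  by_cases hzero : ∃ i, a i + b i = 0
  · obtain ⟨i, hi⟩ := hzero
    have hp : p ≠ 0 := by positivity
    rw [prod_eq_zero (mem_univ i) (by linarith [ha i, hb i] : a i = 0),
      prod_eq_zero (mem_univ i) (by linarith [ha i, hb i] : b i = 0), zero_rpow hp, zero_add]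
    exact rpow_nonneg (prod_nonneg fun i _ ↦ add_nonneg (ha i) (hb i)) p
  push Not at hzero
  set c := fun i ↦ a i + b i
  have hc : ∀ i, 0 < c i := fun i ↦ (add_nonneg (ha i) (hb i)).lt_of_ne' (hzero i)
  have geom_div : ∀ x : ι → ℝ, (∀ i, 0 ≤ x i) →
      (∏ i, x i / c i) ^ p = (∏ i, x i) ^ p / (∏ i, c i) ^ p := fun x hx ↦ by
    rw [prod_div_distrib, div_rpow (prod_nonneg fun i _ ↦ hx i) (prod_nonneg fun i _ ↦ (hc i).le)]
  have hGc : 0 < (∏ i, c i) ^ p := rpow_pos_of_pos (prod_pos fun i _ ↦ hc i) p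
  rw [← div_le_one hGc, add_div, ← geom_div a ha, ← geom_div b hb]
  calc (∏ i, a i / c i) ^ p + (∏ i, b i / c i) ^ p
      ≤ (∑ i, a i / c i) / Fintype.card ι + (∑ i, b i / c i) / Fintype.card ι :=
        add_le_add (prod_rpow_inv_card_le_sum_div_card fun i ↦ div_nonneg (ha i) (hc i).le)
          (prod_rpow_inv_card_le_sum_div_card fun i ↦ div_nonneg (hb i) (hc i).le)
    _ = 1 := by
        rw [← add_div, ← sum_add_distrib, div_eq_one_iff_eq (by positivity)]
        simp only [c, ← add_div, div_self (hzero _)]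
        simp

end Real

namespace Matrix

variable {𝕜 ι : Type*} [RCLike 𝕜] [Fintype ι] [DecidableEq ι]

theorem IsHermitian.det_one_add {C : Matrix ι ι 𝕜} (hC : C.IsHermitian) :
    (1 + C).det = ∏ i, (1 + (hC.eigenvalues i : 𝕜)) := by
  set U := hC.eigenvectorUnitary
  conv_lhs => rw [hC.spectral_theorem]
  rw [← map_one (Unitary.conjStarAlgAut 𝕜 _ U), ← map_add,
    Unitary.conjStarAlgAut_apply, det_mul_right_comm, Unitary.mul_star_self_of_mem U.2, one_mul,
    ← diagonal_one, diagonal_add, det_diagonal]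
  simp

theorem IsHermitian.re_det_eq_prod_eigenvalues {A : Matrix ι ι 𝕜} (hA : A.IsHermitian) :
    RCLike.re A.det = ∏ i, hA.eigenvalues i := by
  rw [hA.det_eq_prod_eigenvalues, ← RCLike.ofReal_prod, RCLike.ofReal_re]

theorem PosDef.re_det_rpow_add_re_det_rpow_le [Nonempty ι] {A B : Matrix ι ι 𝕜} (hA : A.PosDef)
    (hB : B.PosSemidef) :
    RCLike.re A.det ^ (Fintype.card ι : ℝ)⁻¹ + RCLike.re B.det ^ (Fintype.card ι : ℝ)⁻¹ ≤
      RCLike.re (A + B).det ^ (Fintype.card ι : ℝ)⁻¹ := by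
  obtain ⟨D, hD, rfl⟩ := CStarAlgebra.isStrictlyPositive_iff_eq_star_mul_self.mp
    hA.isStrictlyPositive
  have hDinv : D⁻¹ * D = 1 := nonsing_inv_mul D ((isUnit_iff_isUnit_det D).mp hD)
  set C := star D⁻¹ * B * D⁻¹
  have hC : C.PosSemidef := hB.conjTranspose_mul_mul_same D⁻¹
  have hBC : B = star D * C * D := by
    rw [← Matrix.mul_assoc, ← Matrix.mul_assoc, ← star_mul, hDinv, star_one, Matrix.one_mul,
      Matrix.mul_assoc, hDinv, Matrix.mul_one]
  have hABC : star D * D + B = star D * (1 + C) * D := by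
    rw [hBC, Matrix.mul_add, Matrix.add_mul, Matrix.mul_one]
  have det_congr : ∀ X, (star D * X * D).det = (star D * D).det * X.det := fun X ↦ by
    simp only [det_mul]; ring
  set μ := hA.isHermitian.eigenvalues
  set ν := hC.isHermitian.eigenvalues
  have hμ : ∀ i, 0 < μ i := hA.eigenvalues_pos
  have hν : ∀ i, 0 ≤ ν i := hC.eigenvalues_nonneg
  have hdetB : RCLike.re B.det = ∏ i, μ i * ν i := by
    rw [hBC, det_congr, hA.isHermitian.det_eq_prod_eigenvalues,
      hC.isHermitian.det_eq_prod_eigenvalues, ← prod_mul_distrib]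
    simp_rw [← RCLike.ofReal_mul, ← RCLike.ofReal_prod, RCLike.ofReal_re]
    rfl
  have hdetAB : RCLike.re (star D * D + B).det = ∏ i, (μ i + μ i * ν i) := by
    rw [hABC, det_congr, hA.isHermitian.det_eq_prod_eigenvalues, hC.isHermitian.det_one_add,
      ← prod_mul_distrib]
    simp_rw [mul_add, mul_one, ← RCLike.ofReal_mul, ← RCLike.ofReal_add, ← RCLike.ofReal_prod,
      RCLike.ofReal_re]
    rfl
  rw [hA.isHermitian.re_det_eq_prod_eigenvalues, hdetB, hdetAB]
  exact Real.prod_rpow_inv_card_add_le (fun i ↦ (hμ i).le) fun i ↦ mul_nonneg (hμ i).le (hν i)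

theorem re_det_smul_rpow_inv_card [Nonempty ι] {A : Matrix ι ι 𝕜} (hA : 0 ≤ RCLike.re A.det)
    {t : ℝ} (ht : 0 ≤ t) :
    RCLike.re (t • A).det ^ (Fintype.card ι : ℝ)⁻¹ =
      t * RCLike.re A.det ^ (Fintype.card ι : ℝ)⁻¹ := by
  rw [RCLike.real_smul_eq_coe_smul (K := 𝕜), det_smul, ← RCLike.ofReal_pow, RCLike.re_ofReal_mul,
    Real.mul_rpow (by positivity) hA, ← Real.rpow_natCast, ← Real.rpow_mul ht,
    mul_inv_cancel₀ (by positivity), Real.rpow_one]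

end Matrix

/-- Concavity of `A ↦ det(A)^(1/n)` on positive definite Hermitian matrices. -/
theorem det_rpow_concave (n : ℕ) (hn : 0 < n) (A B : Matrix (Fin n) (Fin n) ℂ)
    (hA : A.PosDef) (hB : B.PosDef) (t : ℝ) (ht0 : 0 ≤ t) (ht1 : t ≤ 1) :
    ((((t : ℂ) • A + ((1 - t : ℝ) : ℂ) • B).det).re) ^ ((1 : ℝ) / n) ≥
      t * (A.det.re) ^ ((1 : ℝ) / n) + (1 - t) * (B.det.re) ^ ((1 : ℝ) / n) := by
  have : Nonempty (Fin n) := ⟨⟨0, hn⟩⟩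
  rcases ht0.eq_or_lt with rfl | ht0
  · simp
  have key := (hA.smul ht0).re_det_rpow_add_re_det_rpow_le (hB.posSemidef.smul (sub_nonneg.2 ht1))
  rw [re_det_smul_rpow_inv_card (RCLike.nonneg_iff.mp hA.det_pos.le).1 ht0.le,
    re_det_smul_rpow_inv_card (RCLike.nonneg_iff.mp hB.det_pos.le).1 (sub_nonneg.2 ht1)] at key
  rw [ge_iff_le, Complex.coe_smul, Complex.coe_smul]
  simpa only [Fintype.card_fin, RCLike.re_to_complex, one_div] using key
end

section
/- Let λ₁, …, λₙ be positive reals, let δ > 0, and let 1 ≤ k₀ ≤ n. Suppose that the sum over all k₀-element subsets S of {1,…,n} of 1/(∏_{i∈S} λᵢ) is at most 1/(δ · (k₀! (n−k₀)!/n!)). If moreover each λᵢ ≤ Λ for some Λ > 0, then there exists a constant R > 0 depending only on n, k₀, δ, Λ such that λᵢ ≥ R for all i. -/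
open Finset

/-- Eigenvalue version of uniform ellipticity (Lemma 2.3): a bound on the sum of reciprocals
of `k₀`-fold products of the eigenvalues, together with an upper bound, gives a uniform
positive lower bound on the eigenvalues. -/
theorem eigenvalue_lower_bound (n k₀ : ℕ) (hk₀ : 1 ≤ k₀) (hk₀n : k₀ ≤ n)
    (δ Λ : ℝ) (hδ : 0 < δ) (hΛ : 0 < Λ) :
    ∃ R : ℝ, 0 < R ∧ ∀ lam : Fin n → ℝ, (∀ i, 0 < lam i) →
      (∑ S ∈ Finset.univ.powersetCard k₀, 1 / ∏ i ∈ S, lam i) ≤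
        1 / (δ * ((k₀.factorial * (n - k₀).factorial : ℝ) / n.factorial)) →
      (∀ i, lam i ≤ Λ) → ∀ i, R ≤ lam i := by
  set c : ℝ := δ * ((k₀.factorial * (n - k₀).factorial : ℝ) / n.factorial) with hc
  have hcpos : 0 < c := by
    apply mul_pos hδ
    apply div_pos <;> positivity
  refine ⟨c / Λ ^ (k₀ - 1), by positivity, ?_⟩
  intro lam hpos hsum hub i
  -- find a k₀-subset containing i
  obtain ⟨S, hiS, hScard⟩ := Finset.exists_superset_card_eq (s := {i})
    (by simpa using hk₀) (by simpa using hk₀n)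
  have hSmem : S ∈ Finset.univ.powersetCard k₀ := by
    simp [Finset.mem_powersetCard, hScard]
  have hiS' : i ∈ S := hiS (Finset.mem_singleton_self i)
  have hprodpos : 0 < ∏ j ∈ S, lam j := Finset.prod_pos fun j _ => hpos j
  have hsingle : 1 / ∏ j ∈ S, lam j ≤ 1 / c := by
    refine le_trans (Finset.single_le_sum (f := fun T => 1 / ∏ j ∈ T, lam j) ?_ hSmem) hsum
    intro T hT
    have : 0 < ∏ j ∈ T, lam j := Finset.prod_pos fun j _ => hpos j
    positivity
  have hge : c ≤ ∏ j ∈ S, lam j := le_of_one_div_le_one_div hprodpos hsingle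
  have hsplit : ∏ j ∈ S, lam j = lam i * ∏ j ∈ S.erase i, lam j :=
    (Finset.mul_prod_erase S lam hiS').symm
  have herase : ∏ j ∈ S.erase i, lam j ≤ Λ ^ (k₀ - 1) := by
    have hcard : (S.erase i).card = k₀ - 1 := by rw [Finset.card_erase_of_mem hiS', hScard]
    calc ∏ j ∈ S.erase i, lam j ≤ ∏ _j ∈ S.erase i, Λ :=
          Finset.prod_le_prod (fun j _ => (hpos j).le) (fun j _ => hub j)
      _ = Λ ^ (k₀ - 1) := by rw [Finset.prod_const, hcard]
  have : c ≤ lam i * Λ ^ (k₀ - 1) := by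
    refine hge.trans ?_
    rw [hsplit]
    exact mul_le_mul_of_nonneg_left herase (hpos i).le
  rw [div_le_iff₀ (by positivity)]
  linarith
end

section
/- For positive reals λ₁, …, λₘ and t ∈ [0,1], the function g(t) = ∏_{j=1}^{m} 1/(t + (1−t)λⱼ) is convex on [0,1]. -/
open Finset

/-- The product of the reciprocals of the positive affine functions `t ↦ t + (1−t)λⱼ`
is convex on `[0,1]`. -/
theorem prod_inv_affine_convex (m : ℕ) (lam : Fin m → ℝ) (hlam : ∀ j, 0 < lam j) :
    ConvexOn ℝ (Set.Icc (0 : ℝ) 1)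
      (fun t => ∏ j, 1 / (t + (1 - t) * lam j)) := by
  set f : Fin m → ℝ → ℝ := fun j t => t + (1 - t) * lam j with hf
  have hfpos : ∀ j, ∀ t ∈ Set.Icc (0:ℝ) 1, 0 < f j t := by
    intro j t ht
    obtain ⟨h0, h1⟩ := ht
    have : 0 ≤ (1 - t) * lam j := mul_nonneg (by linarith) (hlam j).le
    show 0 < t + (1 - t) * lam j
    rcases lt_or_ge 0 t with h | h
    · linarith
    · have ht0 : t = 0 := le_antisymm h h0
      simp [ht0, hlam j]
  set S : ℝ → ℝ := fun t => ∑ j, -Real.log (f j t) with hS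
  have hconv : ConvexOn ℝ (Set.Icc (0:ℝ) 1) (fun t => Real.exp (S t)) := by
    refine ⟨convex_Icc 0 1, fun x hx y hy a b ha hb hab => ?_⟩
    have hSle : S (a • x + b • y) ≤ a * S x + b * S y := by
      simp only [hS, Finset.mul_sum, ← Finset.sum_add_distrib]
      apply Finset.sum_le_sum
      intro j _
      have hfx := hfpos j x hx
      have hfy := hfpos j y hy
      have hfz : f j (a • x + b • y) = a * f j x + b * f j y := by
        simp only [hf, smul_eq_mul]; linear_combination (-(lam j)) * hab
      have hlog := strictConcaveOn_log_Ioi.concaveOn.2 (Set.mem_Ioi.2 hfx)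
        (Set.mem_Ioi.2 hfy) ha hb hab
      simp only [smul_eq_mul] at hlog
      rw [hfz]
      nlinarith [hlog]
    calc Real.exp (S (a • x + b • y)) ≤ Real.exp (a * S x + b * S y) :=
          Real.exp_le_exp.2 hSle
      _ = Real.exp (a • S x + b • S y) := by simp [smul_eq_mul]
      _ ≤ a • Real.exp (S x) + b • Real.exp (S y) :=
          convexOn_exp.2 (Set.mem_univ _) (Set.mem_univ _) ha hb hab
      _ = a * Real.exp (S x) + b * Real.exp (S y) := by simp [smul_eq_mul]
  refine hconv.congr fun t ht => ?_
  simp only [hS]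
  rw [Real.exp_sum]
  refine Finset.prod_congr rfl fun j _ => ?_
  rw [Real.exp_neg, Real.exp_log (hfpos j t ht)]
  simp [hf, one_div]
end
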